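/- Let g : ℝᵐ → ℝ ∪ {∞} be a polyhedral function and (z̄, λ̄) ∈ gph ∂g with λ̄ ∈ ri ∂g(z̄). Then the paratingent cone to gph ∂g at (z̄, λ̄), the Clarke (regular) tangent cone, and the ordinary tangent cone all coincide and equal K × K^⊥, where K = K_g(z̄, λ̄) is the (linear subspace) critical cone; in particular ∂g is strictly proto-differentiable at z̄ for λ̄. -/

import Mathlib

open Filter Topology Set Metric

noncomputable section

/-- A polyhedral convex set: a finite intersection of closed half-spaces. -/
def IsPolyhedralSet {E : Type*} [AddCommGroup E] [Module ℝ E] (C : Set E) : Prop :=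
  ∃ (s : ℕ) (b : Fin s → (E →ₗ[ℝ] ℝ)) (β : Fin s → ℝ), C = {x | ∀ i, b i x ≤ β i}

/-- A polyhedral function: proper (never `⊥`, somewhere finite) with polyhedral epigraph. -/
def IsPolyhedralFn {E : Type*} [AddCommGroup E] [Module ℝ E] (g : E → EReal) : Prop :=
  (∃ z, g z ≠ ⊤) ∧ (∀ z, g z ≠ ⊥) ∧
    IsPolyhedralSet {p : E × ℝ | g p.1 ≤ (p.2 : EReal)}

/-- Tangent cone to a convex set: closure of the cone of feasible directions. -/
def tcone {E : Type*} [NormedAddCommGroup E] [NormedSpace ℝ E] (C : Set E) (x : E) : Set E :=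
  closure {w | ∃ t : ℝ, 0 < t ∧ x + t • w ∈ C}

/-- Convex subdifferential of an extended-real-valued function. -/
def subdiff {E : Type*} [NormedAddCommGroup E] [InnerProductSpace ℝ E]
    (g : E → EReal) (z : E) : Set E :=
  {v | ∀ x, g z + ((inner ℝ v (x - z) : ℝ) : EReal) ≤ g x}

/-- Subderivative: `dg(z)(w) = liminf_{t↓0, w'→w} (g(z+tw')-g(z))/t`. -/
def subderiv {E : Type*} [NormedAddCommGroup E] [NormedSpace ℝ E]
    (g : E → EReal) (z : E) (w : E) : EReal :=
  Filter.liminf (fun p : ℝ × E => (g (z + p.1 • p.2) - g z) * (((p.1)⁻¹ : ℝ) : EReal))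
    ((nhdsWithin 0 (Set.Ioi (0 : ℝ))) ×ˢ 𝓝 w)

/-- Critical cone `K_g(z,v) = {w | dg(z)(w) = ⟨v,w⟩}`. -/
def Kcone {E : Type*} [NormedAddCommGroup E] [InnerProductSpace ℝ E]
    (g : E → EReal) (z v : E) : Set E :=
  {w | subderiv g z w = ((inner ℝ v w : ℝ) : EReal)}

/-- Normal cone of convex analysis. -/
def ncone {E : Type*} [NormedAddCommGroup E] [InnerProductSpace ℝ E]
    (C : Set E) (x : E) : Set E :=
  {v | ∀ y ∈ C, (inner ℝ v (y - x) : ℝ) ≤ 0}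

/-- A set is a linear subspace. -/
def IsLinSubspace {E : Type*} [AddCommGroup E] [Module ℝ E] (K : Set E) : Prop :=
  ∃ S : Submodule ℝ E, K = ↑S

/-- Polar cone. -/
def polarCone {E : Type*} [NormedAddCommGroup E] [InnerProductSpace ℝ E] (K : Set E) : Set E :=
  {u | ∀ w ∈ K, (inner ℝ u w : ℝ) ≤ 0}

/-- Fenchel conjugate. -/
def fconj {E : Type*} [NormedAddCommGroup E] [InnerProductSpace ℝ E]
    (g : E → EReal) (v : E) : EReal :=
  ⨆ z, ((inner ℝ v z : ℝ) : EReal) - g z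

/-- Bouligand (contingent) tangent cone, via sequences. -/
def btcone {E : Type*} [NormedAddCommGroup E] [NormedSpace ℝ E] (Ω : Set E) (x : E) : Set E :=
  {w | ∃ (t : ℕ → ℝ) (v : ℕ → E), (∀ n, 0 < t n) ∧ Tendsto t atTop (𝓝 0) ∧
      Tendsto v atTop (𝓝 w) ∧ ∀ n, x + t n • v n ∈ Ω}

/-- Clarke (regular) tangent cone, via sequences. -/
def clarkeT {E : Type*} [NormedAddCommGroup E] [NormedSpace ℝ E] (Ω : Set E) (xb : E) : Set E :=
  {w | ∀ (x : ℕ → E) (t : ℕ → ℝ), (∀ n, x n ∈ Ω) → Tendsto x atTop (𝓝 xb) →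
      (∀ n, 0 < t n) → Tendsto t atTop (𝓝 0) →
      ∃ v : ℕ → E, Tendsto v atTop (𝓝 w) ∧ ∀ n, x n + t n • v n ∈ Ω}

/-- Paratingent cone, via sequences. -/
def paraT {E : Type*} [NormedAddCommGroup E] [NormedSpace ℝ E] (Ω : Set E) (xb : E) : Set E :=
  {w | ∃ (x : ℕ → E) (t : ℕ → ℝ) (v : ℕ → E), (∀ n, x n ∈ Ω) ∧ Tendsto x atTop (𝓝 xb) ∧
      (∀ n, 0 < t n) ∧ Tendsto t atTop (𝓝 0) ∧ Tendsto v atTop (𝓝 w) ∧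
      ∀ n, x n + t n • v n ∈ Ω}

/-!
Write `g` as the maximum of finitely many affine pieces `⟪p i, x⟫ - α i` over a polyhedron
`{x | ∀ j, ⟪q j, x⟫ ≤ β j}`. Then `∂g z` depends only on which constraints and pieces are active
at `z`, and it is a closed set determined by them. Near `zb` the active sets can only shrink, so
`∂g z ⊆ ∂g zb`; and since there are finitely many patterns of active sets, a subgradient at `z`
close enough to `lb` forces `lb ∈ ∂g z`, whence `z - zb` lies in the normal cone `K` to `∂g zb` at
`lb`. As `lb ∈ ri ∂g zb`, `K` is the orthogonal complement of the span of `∂g zb`, and it is also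
the critical cone. Together: near `(zb, lb)` the graph of `∂g` coincides with
`(zb, lb) + K × Kᗮ`, and all three tangent cones of a set that is locally a translate of a closed
subspace equal that subspace.
-/

open scoped RealInnerProductSpace

section TangentCones

variable {F : Type*} [NormedAddCommGroup F] [NormedSpace ℝ F] {Ω : Set F} {xb : F}

theorem clarkeT_subset_btcone (hxb : xb ∈ Ω) : clarkeT Ω xb ⊆ btcone Ω xb := by
  intro w hw
  obtain ⟨v, hv, hmem⟩ := hw (fun _ => xb) (fun n => 1 / (n + 1)) (fun _ => hxb)
    tendsto_const_nhds (fun n => by positivity) tendsto_one_div_add_atTop_nhds_zero_nat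
  exact ⟨_, v, fun n => by positivity, tendsto_one_div_add_atTop_nhds_zero_nat, hv, hmem⟩

theorem btcone_subset_paraT (hxb : xb ∈ Ω) : btcone Ω xb ⊆ paraT Ω xb := by
  rintro w ⟨t, v, ht, ht0, hv, hmem⟩
  exact ⟨fun _ => xb, t, v, fun _ => hxb, tendsto_const_nhds, ht, ht0, hv, hmem⟩

variable {S : Submodule ℝ F}

theorem subset_clarkeT_of_eventually_mem_iff (hloc : ∀ᶠ x in 𝓝 xb, x ∈ Ω ↔ x - xb ∈ S) :
    (S : Set F) ⊆ clarkeT Ω xb := by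
  classical
  intro w hw x t hxΩ hx ht ht0
  have hstep : Tendsto (fun n => x n + t n • w) atTop (𝓝 xb) := by
    simpa using hx.add (ht0.smul_const w)
  have hev : ∀ᶠ n in atTop, x n + t n • w ∈ Ω := by
    filter_upwards [hx.eventually hloc, hstep.eventually hloc] with n hxn hstepn
    refine hstepn.2 ?_
    rw [add_sub_right_comm]
    exact S.add_mem (hxn.1 (hxΩ n)) (S.smul_mem _ hw)
  refine ⟨fun n => if x n + t n • w ∈ Ω then w else 0, ?_, fun n => ?_⟩
  · refine tendsto_const_nhds.congr' ?_
    filter_upwards [hev] with n hn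
    simp [hn]
  · dsimp only
    split_ifs with hn
    · exact hn
    · simpa using hxΩ n

theorem paraT_subset_of_eventually_mem_iff (hS : IsClosed (S : Set F))
    (hloc : ∀ᶠ x in 𝓝 xb, x ∈ Ω ↔ x - xb ∈ S) : paraT Ω xb ⊆ S := by
  rintro w ⟨x, t, v, hxΩ, hx, ht, ht0, hv, hmem⟩
  have hstep : Tendsto (fun n => x n + t n • v n) atTop (𝓝 xb) := by
    simpa using hx.add (ht0.smul hv)
  refine hS.mem_of_tendsto hv ?_
  filter_upwards [hx.eventually hloc, hstep.eventually hloc] with n hxn hstepn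
  have hsmul : t n • v n ∈ S := by
    simpa using S.sub_mem (hstepn.1 (hmem n)) (hxn.1 (hxΩ n))
  simpa [smul_smul, inv_mul_cancel₀ (ht n).ne'] using S.smul_mem (t n)⁻¹ hsmul

theorem tangentCones_eq_of_eventually_mem_iff (hS : IsClosed (S : Set F))
    (hloc : ∀ᶠ x in 𝓝 xb, x ∈ Ω ↔ x - xb ∈ S) :
    clarkeT Ω xb = S ∧ btcone Ω xb = S ∧ paraT Ω xb = S := by
  have hxb : xb ∈ Ω := hloc.self_of_nhds.2 (by simp)
  have hSc := subset_clarkeT_of_eventually_mem_iff hloc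
  have hcb := clarkeT_subset_btcone hxb
  have hbp := btcone_subset_paraT hxb
  have hpS := paraT_subset_of_eventually_mem_iff hS hloc
  exact ⟨(hcb.trans (hbp.trans hpS)).antisymm hSc, (hbp.trans hpS).antisymm (hSc.trans hcb),
    hpS.antisymm ((hSc.trans hcb).trans hbp)⟩

end TangentCones

section ConvexAnalysis

variable {E : Type*} [NormedAddCommGroup E] [InnerProductSpace ℝ E]

theorem eventually_add_mem_of_mem_intrinsicInterior {C : Set E} {x : E}
    (hx : x ∈ intrinsicInterior ℝ C) :
    ∀ᶠ u in 𝓝 0, u ∈ vectorSpan ℝ C → x + u ∈ C := by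
  obtain ⟨y, hy, rfl⟩ := hx
  obtain ⟨ε, hε, hball⟩ := Metric.isOpen_iff.1 isOpen_interior y hy
  filter_upwards [Metric.ball_mem_nhds 0 hε] with u hu hspan
  have hmem : u +ᵥ (y : E) ∈ affineSpan ℝ C :=
    AffineSubspace.vadd_mem_of_mem_direction (by rwa [direction_affineSpan]) y.2
  have hyu : (⟨u +ᵥ (y : E), hmem⟩ : affineSpan ℝ C) ∈ Metric.ball y ε := by
    simpa [Subtype.dist_eq, dist_eq_norm] using hu
  simpa [add_comm] using interior_subset (hball hyu)

theorem ncone_eq_orthogonal_of_mem_intrinsicInterior {C : Set E} {x : E}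
    (hx : x ∈ intrinsicInterior ℝ C) : ncone C x = ((vectorSpan ℝ C)ᗮ : Set E) := by
  have hxC : x ∈ C := intrinsicInterior_subset hx
  ext u
  constructor
  · intro hu
    have hperp : ∀ y ∈ C, ⟪u, y - x⟫ = 0 := by
      intro y hy
      -- `x` can be pushed a little beyond itself, away from `y`, without leaving `C`
      have hid : Tendsto (fun t : ℝ => t) (𝓝[>] 0) (𝓝 0) := nhdsWithin_le_nhds
      have hsmall : Tendsto (fun t : ℝ => t • (x - y)) (𝓝[>] 0) (𝓝 0) := by
        simpa using hid.smul_const (x - y)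
      have hspan : x - y ∈ vectorSpan ℝ C := vsub_mem_vectorSpan ℝ hxC hy
      obtain ⟨t, hext, ht⟩ := ((hsmall.eventually
        (eventually_add_mem_of_mem_intrinsicInterior hx)).and self_mem_nhdsWithin).exists
      have hfar := hu _ (hext (Submodule.smul_mem _ t hspan))
      rw [add_sub_cancel_left, inner_smul_right, ← neg_sub, inner_neg_right] at hfar
      have hnear := hu y hy
      nlinarith [show (0:ℝ) < t from ht]
    have hspan : vectorSpan ℝ C ≤ (ℝ ∙ u)ᗮ := by
      rw [vectorSpan_eq_span_vsub_set_right ℝ hxC, Submodule.span_le]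
      rintro _ ⟨y, hy, rfl⟩
      exact (Submodule.mem_orthogonal_singleton_iff_inner_right).2 (hperp y hy)
    exact Submodule.orthogonal_le hspan (Submodule.le_orthogonal_orthogonal _
      (Submodule.mem_span_singleton_self u))
  · intro hu y hy
    exact ((Submodule.mem_orthogonal' _ u).1 hu _ (vsub_mem_vectorSpan ℝ hy hxC)).le

theorem ne_top_of_mem_subdiff {g : E → EReal} {z v x : E} (hv : v ∈ subdiff g z)
    (hx : g x ≠ ⊤) : g z ≠ ⊤ := by
  intro hz
  have := hv x
  rw [hz, EReal.top_add_coe, top_le_iff] at this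
  exact hx this

end ConvexAnalysis

section Subderivative

theorem EReal.coe_le_sub_mul_inv_of_coe_add_mul_le {a : EReal} {γ r t : ℝ} (ht : 0 < t)
    (h : ((γ + t * r : ℝ) : EReal) ≤ a) : (r : EReal) ≤ (a - γ) * ((t⁻¹ : ℝ) : EReal) := by
  induction a using EReal.rec with
  | bot => exact absurd h (not_le.2 (EReal.bot_lt_coe _))
  | top =>
    rw [EReal.top_sub_coe, EReal.top_mul_of_pos (by exact_mod_cast inv_pos.2 ht)]
    exact le_top
  | coe ξ =>
    rw [← EReal.coe_sub, ← EReal.coe_mul, EReal.coe_le_coe_iff, ← div_eq_mul_inv, le_div_iff₀ ht]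
    have := EReal.coe_le_coe_iff.1 h
    linarith

theorem EReal.sub_mul_inv_le_coe_of_le_coe_add_mul {a : EReal} {γ r t : ℝ} (ht : 0 < t)
    (h : a ≤ ((γ + t * r : ℝ) : EReal)) : (a - γ) * ((t⁻¹ : ℝ) : EReal) ≤ r := by
  induction a using EReal.rec with
  | bot => rw [EReal.bot_sub, EReal.bot_mul_of_pos (by exact_mod_cast inv_pos.2 ht)]; exact bot_le
  | top => exact absurd h (not_le.2 (EReal.coe_lt_top _))
  | coe ξ =>
    rw [← EReal.coe_sub, ← EReal.coe_mul, EReal.coe_le_coe_iff, ← div_eq_mul_inv, div_le_iff₀ ht]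
    have := EReal.coe_le_coe_iff.1 h
    linarith

variable {E : Type*} [NormedAddCommGroup E] [InnerProductSpace ℝ E] {g : E → EReal} {γ : ℝ}

theorem inner_le_subderiv {z v : E} (hv : v ∈ subdiff g z) (hz : g z = γ) (w : E) :
    ((⟪v, w⟫ : ℝ) : EReal) ≤ subderiv g z w := by
  have hlim : Tendsto (fun p : ℝ × E => ((⟪v, p.2⟫ : ℝ) : EReal)) (𝓝[>] 0 ×ˢ 𝓝 w)
      (𝓝 (⟪v, w⟫ : ℝ)) :=
    (continuous_coe_real_ereal.tendsto _).comp (tendsto_const_nhds.inner tendsto_snd)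
  rw [← hlim.liminf_eq]
  refine liminf_le_liminf ?_
  filter_upwards [prod_mem_prod self_mem_nhdsWithin univ_mem] with p hp
  rw [hz]
  refine EReal.coe_le_sub_mul_inv_of_coe_add_mul_le hp.1 ?_
  have := hv (z + p.1 • p.2)
  rwa [hz, add_sub_cancel_left, inner_smul_right, ← EReal.coe_add] at this

theorem subderiv_le_of_eventually_le {z w : E} {r : ℝ} (hz : g z = γ)
    (h : ∀ᶠ t in 𝓝[>] 0, g (z + t • w) ≤ ((γ + t * r : ℝ) : EReal)) :
    subderiv g z w ≤ r := by
  have hray : Tendsto (fun t : ℝ => (t, w)) (𝓝[>] 0) (𝓝[>] 0 ×ˢ 𝓝 w) :=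
    tendsto_id.prodMk tendsto_const_nhds
  refine hray.liminf_le_liminf_comp.trans (liminf_le_of_frequently_le' (Eventually.frequently ?_))
  filter_upwards [h, self_mem_nhdsWithin] with t hle ht
  simp only [Function.comp_apply, hz]
  exact EReal.sub_mul_inv_le_coe_of_le_coe_add_mul ht hle

theorem Kcone_subset_ncone_subdiff {z v : E} (hz : g z = γ) :
    Kcone g z v ⊆ ncone (subdiff g z) v := by
  intro w hw y hy
  have hle := (inner_le_subderiv hy hz w).trans_eq hw
  rw [EReal.coe_le_coe_iff] at hle
  rw [inner_sub_right, real_inner_comm y w, real_inner_comm v w]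
  linarith

theorem sub_mem_ncone_subdiff {z zb lb : E} (hzb : g zb = γ) (hlb : lb ∈ subdiff g z) :
    z - zb ∈ ncone (subdiff g zb) lb := by
  intro y hy
  have hup := hlb zb
  have hlow := hy z
  rw [hzb] at hup hlow
  induction hgz : g z using EReal.rec with
  | bot => rw [hgz] at hlow; exact absurd hlow (by simp)
  | top => rw [hgz, EReal.top_add_coe] at hup; exact absurd hup (by simp)
  | coe ξ =>
    rw [hgz, ← EReal.coe_add, EReal.coe_le_coe_iff] at hup hlow
    have hneg : ⟪lb, zb - z⟫ = -⟪lb, z - zb⟫ := by rw [← inner_neg_right, neg_sub]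
    rw [inner_sub_right, real_inner_comm y, real_inner_comm lb]
    linarith

theorem mem_subdiff_of_le_add_inner {z zb v : E} (hv : v ∈ subdiff g zb) (hzb : g zb = γ)
    (h : g z ≤ ((γ + ⟪v, z - zb⟫ : ℝ) : EReal)) : v ∈ subdiff g z := by
  intro x
  calc g z + ((⟪v, x - z⟫ : ℝ) : EReal)
      ≤ ((γ + ⟪v, z - zb⟫ : ℝ) : EReal) + ((⟪v, x - z⟫ : ℝ) : EReal) := add_le_add_left h _
    _ = g zb + ((⟪v, x - zb⟫ : ℝ) : EReal) := by
      rw [hzb, ← EReal.coe_add, ← EReal.coe_add, add_assoc, ← inner_add_right,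
        sub_add_sub_cancel']
    _ ≤ g x := hv x

end Subderivative

theorem eventually_forall_mem_imp_mem {X τ : Type*} [TopologicalSpace X] [Finite τ]
    {F : τ → Set X} (hF : ∀ i, IsClosed (F i)) (x : X) :
    ∀ᶠ y in 𝓝 x, ∀ i, y ∈ F i → x ∈ F i := by
  refine eventually_all.2 fun i => ?_
  by_cases hx : x ∈ F i
  · exact Eventually.of_forall fun _ _ => hx
  · filter_upwards [(hF i).isOpen_compl.mem_nhds hx] with y hy h using absurd h hy

section Polyhedral

variable {E : Type*} [NormedAddCommGroup E] [InnerProductSpace ℝ E] {ι κ : Type*}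
  (p : ι → E) (α : ι → ℝ) (q : κ → E) (β : κ → ℝ)

def polyDomain : Set E := {x | ∀ j, ⟪q j, x⟫ ≤ β j}

def activeCons (z : E) : Set κ := {j | ⟪q j, z⟫ = β j}

/-- By Farkas's lemma this is `conv {p i | i ∈ I} + cone {q j | j ∈ J}`; the dual description
used here makes closedness immediate and needs no Farkas. -/
def subdiffPattern (J : Set κ) (I : Set ι) : Set E :=
  {v | ∀ w r, (∀ j ∈ J, ⟪q j, w⟫ ≤ 0) → (∀ i ∈ I, ⟪p i, w⟫ ≤ r) → ⟪v, w⟫ ≤ r}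

theorem isClosed_subdiffPattern (J : Set κ) (I : Set ι) : IsClosed (subdiffPattern p q J I) := by
  have hinter : subdiffPattern p q J I = ⋂ (w : E) (r : ℝ) (_ : ∀ j ∈ J, ⟪q j, w⟫ ≤ 0)
      (_ : ∀ i ∈ I, ⟪p i, w⟫ ≤ r), {v | ⟪v, w⟫ ≤ r} := by
    ext v
    simp only [subdiffPattern, mem_iInter, mem_ofPred_eq]
  rw [hinter]
  exact isClosed_iInter fun w => isClosed_iInter fun r => isClosed_iInter fun _ =>
    isClosed_iInter fun _ => isClosed_le (continuous_id.inner continuous_const) continuous_const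

theorem subdiffPattern_mono {J J' : Set κ} {I I' : Set ι} (hJ : J ⊆ J') (hI : I ⊆ I') :
    subdiffPattern p q J I ⊆ subdiffPattern p q J' I' :=
  fun _ hv w r hw hr => hv w r (fun j hj => hw j (hJ hj)) (fun i hi => hr i (hI hi))

variable [Fintype ι] [Nonempty ι]

def maxAffine (x : E) : ℝ := Finset.univ.sup' Finset.univ_nonempty fun i => ⟪p i, x⟫ - α i

open Classical in
def polyFn (x : E) : EReal := if x ∈ polyDomain q β then (maxAffine p α x : EReal) else ⊤

def activePieces (z : E) : Set ι := {i | ⟪p i, z⟫ - α i = maxAffine p α z}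

variable {p α q β} {x z v : E}

theorem maxAffine_le_iff {r : ℝ} : maxAffine p α x ≤ r ↔ ∀ i, ⟪p i, x⟫ - α i ≤ r := by
  simp [maxAffine]

theorem le_maxAffine (i : ι) (x : E) : ⟪p i, x⟫ - α i ≤ maxAffine p α x :=
  maxAffine_le_iff.1 le_rfl i

theorem continuous_maxAffine : Continuous (maxAffine p α) :=
  Continuous.finset_sup'_apply _ fun _ _ =>
    (continuous_const.inner continuous_id).sub continuous_const

theorem polyFn_of_mem (hx : x ∈ polyDomain q β) : polyFn p α q β x = maxAffine p α x := by
  simp [polyFn, hx]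

theorem polyFn_ne_top_iff : polyFn p α q β x ≠ ⊤ ↔ x ∈ polyDomain q β := by
  by_cases hx : x ∈ polyDomain q β <;> simp [polyFn, hx]

theorem polyFn_le_coe_iff {r : ℝ} :
    polyFn p α q β x ≤ r ↔ x ∈ polyDomain q β ∧ maxAffine p α x ≤ r := by
  by_cases hx : x ∈ polyDomain q β <;> simp [polyFn, hx]

theorem mem_subdiff_polyFn_iff (hz : z ∈ polyDomain q β) :
    v ∈ subdiff (polyFn p α q β) z ↔
      ∀ x ∈ polyDomain q β, maxAffine p α z + ⟪v, x - z⟫ ≤ maxAffine p α x := by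
  refine forall_congr' fun x => ?_
  by_cases hx : x ∈ polyDomain q β
  · simp [polyFn, hx, hz, ← EReal.coe_add]
  · simp [polyFn, hx, hz]

theorem subdiffPattern_subset_subdiff_polyFn (hz : z ∈ polyDomain q β) :
    subdiffPattern p q (activeCons q β z) (activePieces p α z) ⊆ subdiff (polyFn p α q β) z := by
  intro v hv
  rw [mem_subdiff_polyFn_iff hz]
  intro x hx
  have hvx := hv (x - z) (maxAffine p α x - maxAffine p α z)
    (fun j hj => by rw [inner_sub_right, hj]; linarith [hx j])
    (fun i (hi : _ = _) => by rw [inner_sub_right]; linarith [le_maxAffine (p := p) (α := α) i x])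
  linarith

theorem polyFn_le_of_active_of_inactive {ρ : ℝ}
    (hJ : ∀ j ∈ activeCons q β z, ⟪q j, x - z⟫ ≤ 0)
    (hI : ∀ i ∈ activePieces p α z, ⟪p i, x - z⟫ ≤ ρ)
    (hJ' : ∀ j ∉ activeCons q β z, ⟪q j, x⟫ ≤ β j)
    (hI' : ∀ i ∉ activePieces p α z, ⟪p i, x⟫ - α i ≤ maxAffine p α z + ρ) :
    polyFn p α q β x ≤ ((maxAffine p α z + ρ : ℝ) : EReal) := by
  refine polyFn_le_coe_iff.2 ⟨fun j => ?_, maxAffine_le_iff.2 fun i => ?_⟩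
  · by_cases hj : j ∈ activeCons q β z
    · have := hJ j hj
      rw [inner_sub_right, hj] at this
      linarith
    · exact hJ' j hj
  · by_cases hi : i ∈ activePieces p α z
    · have := hI i hi
      have hi' : ⟪p i, z⟫ - α i = maxAffine p α z := hi
      rw [inner_sub_right] at this
      linarith
    · exact hI' i hi

variable [Finite κ]

theorem eventually_polyFn_le {X : Type*} {l : Filter X} {x : X → E} {ρ : X → ℝ}
    (hz : z ∈ polyDomain q β) (hx : Tendsto x l (𝓝 z)) (hρ : Tendsto ρ l (𝓝 0)) :
    ∀ᶠ a in l, (∀ j ∈ activeCons q β z, ⟪q j, x a - z⟫ ≤ 0) →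
      (∀ i ∈ activePieces p α z, ⟪p i, x a - z⟫ ≤ ρ a) →
      polyFn p α q β (x a) ≤ ((maxAffine p α z + ρ a : ℝ) : EReal) := by
  have hcons : ∀ j, ∀ᶠ a in l, j ∉ activeCons q β z → ⟪q j, x a⟫ ≤ β j := by
    intro j
    by_cases hj : j ∈ activeCons q β z
    · exact Eventually.of_forall fun _ h => absurd hj h
    · have hlt : ⟪q j, z⟫ < β j := (hz j).lt_of_ne hj
      filter_upwards [(tendsto_const_nhds.inner hx).eventually (eventually_lt_nhds hlt)]
        with a ha _ using ha.le
  have hpieces : ∀ i, ∀ᶠ a in l, i ∉ activePieces p α z →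
      ⟪p i, x a⟫ - α i ≤ maxAffine p α z + ρ a := by
    intro i
    by_cases hi : i ∈ activePieces p α z
    · exact Eventually.of_forall fun _ h => absurd hi h
    · have hlt : ⟪p i, z⟫ - α i < maxAffine p α z := (le_maxAffine i z).lt_of_ne hi
      have hlim : Tendsto (fun a => ⟪p i, x a⟫ - α i - (maxAffine p α z + ρ a)) l
          (𝓝 (⟪p i, z⟫ - α i - (maxAffine p α z + 0))) :=
        (((tendsto_const_nhds (x := p i)).inner hx).sub_const _).sub (tendsto_const_nhds.add hρ)
      filter_upwards [hlim.eventually (eventually_lt_nhds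
        (show ⟪p i, z⟫ - α i - (maxAffine p α z + 0) < 0 by linarith))] with a ha _
      linarith
  filter_upwards [eventually_all.2 hcons, eventually_all.2 hpieces] with a hcons hpieces hJ hI
    using polyFn_le_of_active_of_inactive hJ hI hcons hpieces

theorem eventually_polyFn_add_smul_le (hz : z ∈ polyDomain q β) {w : E} {r : ℝ}
    (hJ : ∀ j ∈ activeCons q β z, ⟪q j, w⟫ ≤ 0) (hI : ∀ i ∈ activePieces p α z, ⟪p i, w⟫ ≤ r) :
    ∀ᶠ t in 𝓝[>] 0, polyFn p α q β (z + t • w) ≤ ((maxAffine p α z + t * r : ℝ) : EReal) := by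
  have ht : Tendsto (fun t : ℝ => t) (𝓝[>] 0) (𝓝 0) := nhdsWithin_le_nhds
  have hray : Tendsto (fun t : ℝ => z + t • w) (𝓝[>] 0) (𝓝 z) := by
    simpa using (ht.smul_const w).const_add z
  have hρ : Tendsto (fun t : ℝ => t * r) (𝓝[>] 0) (𝓝 0) := by simpa using ht.mul_const r
  filter_upwards [eventually_polyFn_le (p := p) (α := α) hz hray hρ, self_mem_nhdsWithin]
    with t hle ht
  refine hle (fun j hj => ?_) (fun i hi => ?_) <;>
    simp only [add_sub_cancel_left, inner_smul_right]
  · exact mul_nonpos_of_nonneg_of_nonpos (le_of_lt ht) (hJ j hj)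
  · exact mul_le_mul_of_nonneg_left (hI i hi) (le_of_lt ht)

theorem subdiff_polyFn_eq (hz : z ∈ polyDomain q β) :
    subdiff (polyFn p α q β) z = subdiffPattern p q (activeCons q β z) (activePieces p α z) := by
  refine subset_antisymm (fun v hv w r hJ hI => ?_) (subdiffPattern_subset_subdiff_polyFn hz)
  obtain ⟨t, hle, ht⟩ := ((eventually_polyFn_add_smul_le hz hJ hI).and self_mem_nhdsWithin).exists
  have hlow := (hv (z + t • w)).trans hle
  rw [polyFn_of_mem hz, add_sub_cancel_left, inner_smul_right, ← EReal.coe_add,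
    EReal.coe_le_coe_iff] at hlow
  nlinarith [show (0 : ℝ) < t from ht]

theorem eventually_active_subset (z : E) :
    ∀ᶠ x in 𝓝 z, activeCons q β x ⊆ activeCons q β z ∧ activePieces p α x ⊆ activePieces p α z := by
  have hcons : ∀ j, ∀ᶠ x in 𝓝 z, j ∈ activeCons q β x → j ∈ activeCons q β z := by
    intro j
    by_cases hj : ⟪q j, z⟫ = β j
    · exact Eventually.of_forall fun _ _ => hj
    · have hopen : IsOpen {x : E | ⟪q j, x⟫ ≠ β j} :=
        isOpen_ne_fun (continuous_const.inner continuous_id) continuous_const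
      filter_upwards [hopen.mem_nhds hj] with x hx h using absurd h hx
  have hpieces : ∀ i, ∀ᶠ x in 𝓝 z, i ∈ activePieces p α x → i ∈ activePieces p α z := by
    intro i
    by_cases hi : ⟪p i, z⟫ - α i = maxAffine p α z
    · exact Eventually.of_forall fun _ _ => hi
    · filter_upwards [(isOpen_ne_fun ((continuous_const.inner continuous_id).sub continuous_const)
        continuous_maxAffine).mem_nhds hi] with x hx h using absurd h hx
  filter_upwards [eventually_all.2 hcons, eventually_all.2 hpieces] with x hcons hpieces
  exact ⟨fun j => hcons j, fun i => hpieces i⟩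

theorem eventually_subdiff_polyFn_subset (hz : z ∈ polyDomain q β) :
    ∀ᶠ x in 𝓝 z, subdiff (polyFn p α q β) x ⊆ subdiff (polyFn p α q β) z := by
  filter_upwards [eventually_active_subset (p := p) (α := α) (q := q) (β := β) z]
    with x ⟨hJ, hI⟩ v hv
  have hx : x ∈ polyDomain q β :=
    polyFn_ne_top_iff.1 (ne_top_of_mem_subdiff hv (polyFn_ne_top_iff.2 hz))
  rw [subdiff_polyFn_eq hx] at hv
  rw [subdiff_polyFn_eq hz]
  exact subdiffPattern_mono p q hJ hI hv

theorem eventually_forall_mem_subdiff_polyFn_imp (lb : E) :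
    ∀ᶠ v in 𝓝 lb, ∀ z ∈ polyDomain q β,
      v ∈ subdiff (polyFn p α q β) z → lb ∈ subdiff (polyFn p α q β) z := by
  filter_upwards [eventually_forall_mem_imp_mem (τ := Set κ × Set ι)
    (fun σ : Set κ × Set ι => isClosed_subdiffPattern p q σ.1 σ.2) lb] with v hv z hz
  rw [subdiff_polyFn_eq hz]
  exact hv (activeCons q β z, activePieces p α z)

theorem active_inner_le_of_mem_ncone (hz : z ∈ polyDomain q β)
    (hv : v ∈ subdiff (polyFn p α q β) z) {w : E}
    (hw : w ∈ ncone (subdiff (polyFn p α q β) z) v) :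
    (∀ j ∈ activeCons q β z, ⟪q j, w⟫ ≤ 0) ∧ ∀ i ∈ activePieces p α z, ⟪p i, w⟫ ≤ ⟪v, w⟫ := by
  rw [subdiff_polyFn_eq hz] at hv hw
  constructor
  · intro j hj
    have hvq : v + q j ∈ subdiffPattern p q (activeCons q β z) (activePieces p α z) := by
      intro w' r hJ hI
      rw [inner_add_left]
      linarith [hv w' r hJ hI, hJ j hj]
    simpa [real_inner_comm] using hw _ hvq
  · intro i hi
    have hp : p i ∈ subdiffPattern p q (activeCons q β z) (activePieces p α z) :=
      fun _ _ _ hI => hI i hi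
    have := hw _ hp
    rw [inner_sub_right, real_inner_comm (p i) w, real_inner_comm v w] at this
    linarith

theorem ncone_subdiff_polyFn_subset_Kcone (hz : z ∈ polyDomain q β)
    (hv : v ∈ subdiff (polyFn p α q β) z) :
    ncone (subdiff (polyFn p α q β) z) v ⊆ Kcone (polyFn p α q β) z v := by
  intro w hw
  obtain ⟨hJ, hI⟩ := active_inner_le_of_mem_ncone hz hv hw
  exact le_antisymm (subderiv_le_of_eventually_le (polyFn_of_mem hz)
    (eventually_polyFn_add_smul_le hz hJ hI)) (inner_le_subderiv hv (polyFn_of_mem hz) w)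

theorem Kcone_polyFn_eq (hz : z ∈ polyDomain q β)
    (hri : v ∈ intrinsicInterior ℝ (subdiff (polyFn p α q β) z)) :
    Kcone (polyFn p α q β) z v = ((vectorSpan ℝ (subdiff (polyFn p α q β) z))ᗮ : Set E) := by
  rw [← ncone_eq_orthogonal_of_mem_intrinsicInterior hri]
  exact (Kcone_subset_ncone_subdiff (polyFn_of_mem hz)).antisymm
    (ncone_subdiff_polyFn_subset_Kcone hz (intrinsicInterior_subset hri))

theorem eventually_polyFn_le_of_sub_mem_ncone (hz : z ∈ polyDomain q β)
    (hv : v ∈ subdiff (polyFn p α q β) z) :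
    ∀ᶠ x in 𝓝 z, x - z ∈ ncone (subdiff (polyFn p α q β) z) v →
      polyFn p α q β x ≤ ((maxAffine p α z + ⟪v, x - z⟫ : ℝ) : EReal) := by
  have hρ : Tendsto (fun x => ⟪v, x - z⟫) (𝓝 z) (𝓝 0) := by
    have : Continuous fun x => ⟪v, x - z⟫ := by fun_prop
    simpa using this.tendsto z
  filter_upwards [eventually_polyFn_le (p := p) (α := α) hz tendsto_id hρ] with x hx hxz
  exact hx (active_inner_le_of_mem_ncone hz hv hxz).1 (active_inner_le_of_mem_ncone hz hv hxz).2

theorem eventually_mem_subdiff_polyFn_iff [FiniteDimensional ℝ E] {zb lb : E}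
    (hzb : zb ∈ polyDomain q β) (hri : lb ∈ intrinsicInterior ℝ (subdiff (polyFn p α q β) zb)) :
    ∀ᶠ zv : E × E in 𝓝 (zb, lb), zv.2 ∈ subdiff (polyFn p α q β) zv.1 ↔
      zv - (zb, lb) ∈ ((vectorSpan ℝ (subdiff (polyFn p α q β) zb))ᗮ).prod
        (vectorSpan ℝ (subdiff (polyFn p α q β) zb))ᗮᗮ := by
  set D := subdiff (polyFn p α q β) zb
  have hlb : lb ∈ D := intrinsicInterior_subset hri
  have hN := ncone_eq_orthogonal_of_mem_intrinsicInterior hri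
  have hD : ∀ᶠ v in 𝓝 lb, v - lb ∈ vectorSpan ℝ D → v ∈ D := by
    filter_upwards [(tendsto_sub_nhds_zero_iff.2 tendsto_id).eventually
      (eventually_add_mem_of_mem_intrinsicInterior hri)] with v hv hspan
    simpa using hv hspan
  rw [nhds_prod_eq]
  filter_upwards [(eventually_subdiff_polyFn_subset (p := p) (α := α) hzb).and
      (eventually_polyFn_le_of_sub_mem_ncone hzb hlb) |>.prod_mk
      ((eventually_forall_mem_subdiff_polyFn_imp (p := p) (α := α) (q := q) (β := β) lb).and hD)]
    with ⟨z, v⟩ ⟨⟨hsub, hup⟩, hlbz, hvD⟩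
  rw [Submodule.orthogonal_orthogonal, Prod.mk_sub_mk, Submodule.mem_prod, ← SetLike.mem_coe, ← hN]
  constructor
  · intro hv
    have hz : z ∈ polyDomain q β :=
      polyFn_ne_top_iff.1 (ne_top_of_mem_subdiff hv (polyFn_ne_top_iff.2 hzb))
    exact ⟨sub_mem_ncone_subdiff (polyFn_of_mem hzb) (hlbz z hz hv),
      vsub_mem_vectorSpan ℝ (hsub hv) hlb⟩
  · rintro ⟨hzK, hvspan⟩
    have hperp : ⟪v - lb, z - zb⟫ = 0 := by
      rw [hN] at hzK
      exact (Submodule.mem_orthogonal _ _).1 hzK _ hvspan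
    refine mem_subdiff_of_le_add_inner (hvD hvspan) (polyFn_of_mem hzb) ((hup hzK).trans_eq ?_)
    rw [inner_sub_left] at hperp
    rw [show ⟪v, z - zb⟫ = ⟪lb, z - zb⟫ by linarith]

end Polyhedral

theorem EReal.eq_of_forall_le_coe_iff {a b : EReal} (h : ∀ r : ℝ, a ≤ r ↔ b ≤ r) : a = b := by
  refine le_antisymm (le_of_not_gt fun hlt => ?_) (le_of_not_gt fun hlt => ?_) <;>
    obtain ⟨r, h1, h2⟩ := EReal.exists_between_coe_real hlt
  · exact h2.not_ge ((h r).2 h1.le)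
  · exact h2.not_ge ((h r).1 h1.le)

section Representation

variable {E : Type*} [NormedAddCommGroup E] [InnerProductSpace ℝ E] [FiniteDimensional ℝ E]

theorem LinearMap.exists_inner_add_mul (b : E × ℝ →ₗ[ℝ] ℝ) :
    ∃ (u : E) (c : ℝ), ∀ x r, b (x, r) = ⟪u, x⟫ + r * c := by
  refine ⟨(InnerProductSpace.toDual ℝ E).symm (b.comp (LinearMap.inl ℝ E ℝ)).toContinuousLinearMap,
    b (0, 1), fun x r => ?_⟩
  rw [InnerProductSpace.toDual_symm_apply, show (x, r) = (x, 0) + r • ((0, 1) : E × ℝ) by simp,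
    map_add, map_smul]
  simp

theorem IsPolyhedralFn.exists_le_coe_iff {g : E → EReal} (hg : IsPolyhedralFn g) :
    ∃ (s : ℕ) (u : Fin s → E) (c γ : Fin s → ℝ), (∀ i, c i ≤ 0) ∧
      ∀ x (r : ℝ), g x ≤ r ↔ ∀ i, ⟪u i, x⟫ + r * c i ≤ γ i := by
  obtain ⟨⟨z0, hz0⟩, hbot, s, b, γ, hepi⟩ := hg
  choose u c hb using fun i => (b i).exists_inner_add_mul
  have hle : ∀ x (r : ℝ), g x ≤ r ↔ ∀ i, ⟪u i, x⟫ + r * c i ≤ γ i := fun x r => by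
    simpa [hb] using Set.ext_iff.1 hepi (x, r)
  refine ⟨s, u, c, γ, fun i => ?_, hle⟩
  -- the epigraph is closed upwards, which no half-space with `c i > 0` is
  by_contra! hci
  obtain ⟨r0, hr0⟩ : ∃ r0 : ℝ, (r0 : EReal) = g z0 := CanLift.prf _ ⟨hz0, hbot z0⟩
  set r := max r0 ((γ i - ⟪u i, z0⟫) / c i + 1)
  have hmem := (hle z0 r).1 (hr0 ▸ EReal.coe_le_coe_iff.2 (le_max_left _ _)) i
  have hbig : ((γ i - ⟪u i, z0⟫) / c i + 1) * c i ≤ r * c i :=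
    mul_le_mul_of_nonneg_right (le_max_right _ _) hci.le
  rw [add_mul, div_mul_cancel₀ _ hci.ne'] at hbig
  linarith

theorem IsPolyhedralFn.exists_eq_polyFn {g : E → EReal} (hg : IsPolyhedralFn g) :
    ∃ (ι κ : Type) (_ : Fintype ι) (_ : Nonempty ι) (_ : Finite κ) (p : ι → E) (α : ι → ℝ)
      (q : κ → E) (β : κ → ℝ), g = polyFn p α q β := by
  classical
  obtain ⟨s, u, c, γ, hc, hle⟩ := hg.exists_le_coe_iff
  have hne : Nonempty {i // c i < 0} := by
    by_contra! hempty
    obtain ⟨z0, hz0⟩ := hg.1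
    obtain ⟨r0, hr0⟩ : ∃ r0 : ℝ, (r0 : EReal) = g z0 := CanLift.prf _ ⟨hz0, hg.2.1 z0⟩
    have hzero : ∀ i, c i = 0 := fun i => (hc i).eq_of_not_lt fun hi => hempty.false ⟨i, hi⟩
    have hlow := (hle z0 (r0 - 1)).2 fun i => by simpa [hzero] using (hle z0 r0).1 hr0.ge i
    rw [← hr0, EReal.coe_le_coe_iff] at hlow
    linarith
  refine ⟨{i // c i < 0}, {i // c i = 0}, inferInstance, hne, inferInstance,
    fun i => (-c i)⁻¹ • u i, fun i => γ i / -c i, fun j => u j, fun j => γ j,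
    funext fun x => EReal.eq_of_forall_le_coe_iff fun r => ?_⟩
  rw [hle, polyFn_le_coe_iff, maxAffine_le_iff]
  constructor
  · intro h
    refine ⟨fun j => by simpa [j.2] using h j, fun i => ?_⟩
    rw [real_inner_smul_left, ← div_eq_inv_mul, ← sub_div, div_le_iff₀ (neg_pos.2 i.2)]
    linarith [h i]
  · rintro ⟨hq, hp⟩ i
    rcases (hc i).lt_or_eq with hi | hi
    · have := hp ⟨i, hi⟩
      rw [real_inner_smul_left, ← div_eq_inv_mul, ← sub_div, div_le_iff₀ (neg_pos.2 hi)] at this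
      linarith
    · simpa [hi] using hq ⟨i, hi⟩

end Representation

theorem stmt13_general {m : ℕ} (g : EuclideanSpace ℝ (Fin m) → EReal) (hg : IsPolyhedralFn g)
    (zb lb : EuclideanSpace ℝ (Fin m))
    (hri : lb ∈ intrinsicInterior ℝ (subdiff g zb)) :
    clarkeT {p : EuclideanSpace ℝ (Fin m) × EuclideanSpace ℝ (Fin m) |
          p.2 ∈ subdiff g p.1} (zb, lb) =
      (Kcone g zb lb) ×ˢ {u | ∀ w ∈ Kcone g zb lb, (inner ℝ w u : ℝ) = 0} ∧
    btcone {p : EuclideanSpace ℝ (Fin m) × EuclideanSpace ℝ (Fin m) |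
          p.2 ∈ subdiff g p.1} (zb, lb) =
      (Kcone g zb lb) ×ˢ {u | ∀ w ∈ Kcone g zb lb, (inner ℝ w u : ℝ) = 0} ∧
    paraT {p : EuclideanSpace ℝ (Fin m) × EuclideanSpace ℝ (Fin m) |
          p.2 ∈ subdiff g p.1} (zb, lb) =
      (Kcone g zb lb) ×ˢ {u | ∀ w ∈ Kcone g zb lb, (inner ℝ w u : ℝ) = 0} := by
  obtain ⟨z0, hz0⟩ := hg.1
  have hzb := ne_top_of_mem_subdiff (intrinsicInterior_subset hri) hz0
  obtain ⟨ι, κ, _, _, _, p, α, q, β, rfl⟩ := hg.exists_eq_polyFn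
  rw [polyFn_ne_top_iff] at hzb
  set K := (vectorSpan ℝ (subdiff (polyFn p α q β) zb))ᗮ
  have hKK : Kcone (polyFn p α q β) zb lb ×ˢ {u | ∀ w ∈ Kcone (polyFn p α q β) zb lb, ⟪w, u⟫ = 0} =
      (K.prod Kᗮ : Set _) := by
    rw [Kcone_polyFn_eq hzb hri, Submodule.prod_coe]
    rfl
  rw [hKK]
  exact tangentCones_eq_of_eventually_mem_iff (K.prod Kᗮ).closed_of_finiteDimensional
    (eventually_mem_subdiff_polyFn_iff hzb hri)

/-- under `lb ∈ ri ∂g(zb)`, the Clarke tangent cone, the tangent cone,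
and the paratingent cone to `gph ∂g` at `(zb,lb)` all equal `K × K^⊥`; in particular
`∂g` is strictly proto-differentiable at `zb` for `lb`. -/
theorem stmt13 {m : ℕ} (g : EuclideanSpace ℝ (Fin m) → EReal) (hg : IsPolyhedralFn g)
    (zb lb : EuclideanSpace ℝ (Fin m)) (hl : lb ∈ subdiff g zb)
    (hri : lb ∈ intrinsicInterior ℝ (subdiff g zb)) :
    clarkeT {p : EuclideanSpace ℝ (Fin m) × EuclideanSpace ℝ (Fin m) |
          p.2 ∈ subdiff g p.1} (zb, lb) =
      (Kcone g zb lb) ×ˢ {u | ∀ w ∈ Kcone g zb lb, (inner ℝ w u : ℝ) = 0} ∧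
    btcone {p : EuclideanSpace ℝ (Fin m) × EuclideanSpace ℝ (Fin m) |
          p.2 ∈ subdiff g p.1} (zb, lb) =
      (Kcone g zb lb) ×ˢ {u | ∀ w ∈ Kcone g zb lb, (inner ℝ w u : ℝ) = 0} ∧
    paraT {p : EuclideanSpace ℝ (Fin m) × EuclideanSpace ℝ (Fin m) |
          p.2 ∈ subdiff g p.1} (zb, lb) =
      (Kcone g zb lb) ×ˢ {u | ∀ w ∈ Kcone g zb lb, (inner ℝ w u : ℝ) = 0} :=
  stmt13_general g hg zb lb hri
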